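/- arXiv:1407.4406 — 3 statements merged into one kernel-verified Lean document; each statement's English description precedes it below -/
import Mathlib

section
/- Let V be an n-dimensional real inner product space, ξ ∈ V nonzero, and η a symmetric bilinear form on V. Then ⟨ξ ⊗ ξ − |ξ|² g, η⟩² ≤ (n−1)|ξ|⁴ |η|², where ⟨·,·⟩ is the Hilbert–Schmidt inner product on symmetric bilinear forms, with equality when η = ξ ⊗ ξ − |ξ|² g. -/
open Finset

noncomputable def normSq (n : ℕ) (ξ : Fin n → ℝ) : ℝ := ∑ i, ξ i ^ 2

noncomputable def tensorSq (n : ℕ) (ξ : Fin n → ℝ) : Fin n → Fin n → ℝ :=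
  fun i j => ξ i * ξ j

noncomputable def gform (n : ℕ) : Fin n → Fin n → ℝ :=
  fun i j => if i = j then 1 else 0

noncomputable def hsInner (n : ℕ) (A B : Fin n → Fin n → ℝ) : ℝ :=
  ∑ i, ∑ j, A i j * B i j

noncomputable def traceForm (n : ℕ) (η : Fin n → Fin n → ℝ) : ℝ := ∑ i, η i i

noncomputable def trComp (n : ℕ) (η : Fin n → Fin n → ℝ) : Fin n → Fin n → ℝ :=
  fun i j => ∑ k, η k i * η k j

/-! Cauchy–Schwarz for the Hilbert–Schmidt inner product, combined with
`|ξ ⊗ ξ - c g|² = |ξ|⁴ - 2c|ξ|² + n c²`, which for `c = |ξ|²` is `(n - 1)|ξ|⁴`. -/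

theorem hsInner_sq_le_mul (n : ℕ) (A B : Fin n → Fin n → ℝ) :
    hsInner n A B ^ 2 ≤ hsInner n A A * hsInner n B B := by
  simp only [hsInner, ← Fintype.sum_prod_type']
  simpa only [sq] using sum_mul_sq_le_sq_mul_sq univ (fun p : Fin n × Fin n => A p.1 p.2)
    (fun p => B p.1 p.2)

theorem hsInner_self_tensorSq_sub_mul_gform (n : ℕ) (ξ : Fin n → ℝ) (c : ℝ) :
    hsInner n (fun i j => tensorSq n ξ i j - c * gform n i j)
        (fun i j => tensorSq n ξ i j - c * gform n i j)
      = normSq n ξ ^ 2 - 2 * c * normSq n ξ + n * c ^ 2 := by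
  have hrow : ∀ i,
      ∑ j, (tensorSq n ξ i j - c * gform n i j) * (tensorSq n ξ i j - c * gform n i j)
        = ξ i ^ 2 * normSq n ξ - 2 * c * ξ i ^ 2 + c ^ 2 := by
    intro i
    have hentry : ∀ j,
        (tensorSq n ξ i j - c * gform n i j) * (tensorSq n ξ i j - c * gform n i j)
          = ξ i ^ 2 * ξ j ^ 2 - (if i = j then 2 * c * ξ i ^ 2 - c ^ 2 else 0) := by
      intro j
      by_cases h : i = j
      · subst h; simp only [tensorSq, gform, if_true]; ring
      · simp only [tensorSq, gform, if_neg h]; ring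
    simp only [hentry, sum_sub_distrib, sum_ite_eq, mem_univ, if_true, ← mul_sum, normSq]
    ring
  simp only [hsInner, hrow, sum_add_distrib, sum_sub_distrib, sum_const, card_univ,
    Fintype.card_fin, nsmul_eq_mul, ← sum_mul, ← mul_sum]
  rw [← normSq]
  ring

theorem stmt_1_general (n : ℕ) (ξ : Fin n → ℝ)
    (η : Fin n → Fin n → ℝ) :
    (hsInner n (fun i j => tensorSq n ξ i j - normSq n ξ * gform n i j) η) ^ 2
      ≤ ((n : ℝ) - 1) * (normSq n ξ) ^ 2 * hsInner n η η
    ∧ ((∀ i j, η i j = tensorSq n ξ i j - normSq n ξ * gform n i j) →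
        (hsInner n (fun i j => tensorSq n ξ i j - normSq n ξ * gform n i j) η) ^ 2
          = ((n : ℝ) - 1) * (normSq n ξ) ^ 2 * hsInner n η η) := by
  set A : Fin n → Fin n → ℝ := fun i j => tensorSq n ξ i j - normSq n ξ * gform n i j
  have hAA : hsInner n A A = ((n : ℝ) - 1) * normSq n ξ ^ 2 := by
    rw [hsInner_self_tensorSq_sub_mul_gform]; ring
  refine ⟨hAA ▸ hsInner_sq_le_mul n A η, fun hη => ?_⟩
  obtain rfl : η = A := funext₂ hη
  rw [hAA]; ring

/-- Cauchy–Schwarz bound `⟨ξ⊗ξ - |ξ|²g, η⟩² ≤ (n-1)|ξ|⁴|η|²` for every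
symmetric bilinear form `η`, with equality when `η = ξ⊗ξ - |ξ|²g`. -/
theorem stmt_1 (n : ℕ) (ξ : Fin n → ℝ) (hξ : ξ ≠ 0)
    (η : Fin n → Fin n → ℝ) (hsym : ∀ i j, η i j = η j i) :
    (hsInner n (fun i j => tensorSq n ξ i j - normSq n ξ * gform n i j) η) ^ 2
      ≤ ((n : ℝ) - 1) * (normSq n ξ) ^ 2 * hsInner n η η
    ∧ ((∀ i j, η i j = tensorSq n ξ i j - normSq n ξ * gform n i j) →
        (hsInner n (fun i j => tensorSq n ξ i j - normSq n ξ * gform n i j) η) ^ 2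
          = ((n : ℝ) - 1) * (normSq n ξ) ^ 2 * hsInner n η η) :=
  stmt_1_general n ξ η
end

section
/- Let V be an n-dimensional real inner product space (n ≥ 2), c > 0, and a ≤ −1/(2(n−1)). Then there exist a nonzero ξ ∈ V and a nonzero symmetric bilinear form η on V (namely η = |ξ|²g − ξ⊗ξ) such that c·( (1/2)|ξ|⁴|η|² + a·⟨ξ⊗ξ − |ξ|²g, η⟩² ) ≤ 0. Hence the symbol fails to be strongly elliptic. -/
open Finset

/-
For every `ξ`, the form `η = |ξ|²g - ξ⊗ξ` satisfies `⟨ξ⊗ξ - |ξ|²g, η⟩ = -|η|²` and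
`|η|² = (n - 1)|ξ|⁴`, so the symbol evaluated at `(ξ, η)` equals
`c (n - 1) |ξ|⁸ (1/2 + a (n - 1))`, which is `≤ 0` exactly when `a ≤ -1/(2(n - 1))`.
-/

noncomputable def projForm (n : ℕ) (ξ : Fin n → ℝ) : Fin n → Fin n → ℝ :=
  fun i j => normSq n ξ * gform n i j - tensorSq n ξ i j

lemma projForm_symm (n : ℕ) (ξ : Fin n → ℝ) (i j : Fin n) :
    projForm n ξ i j = projForm n ξ j i := by
  simp only [projForm, gform, tensorSq, eq_comm (a := i), mul_comm (ξ i)]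

lemma sum_gform_mul (n : ℕ) (f : Fin n → ℝ) (i : Fin n) :
    ∑ j, gform n i j * f j = f i := by
  simp [gform]

lemma hsInner_neg_left (n : ℕ) (A B : Fin n → Fin n → ℝ) :
    hsInner n (fun i j => -A i j) B = -hsInner n A B := by
  simp [hsInner, neg_mul, sum_neg_distrib]

lemma hsInner_projForm_self (n : ℕ) (ξ : Fin n → ℝ) :
    hsInner n (projForm n ξ) (projForm n ξ) = ((n : ℝ) - 1) * normSq n ξ ^ 2 := by
  have hrow : ∀ i, ∑ j, projForm n ξ i j * projForm n ξ i j
      = normSq n ξ ^ 2 - normSq n ξ * ξ i ^ 2 := by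
    intro i
    have hgg : ∀ j, gform n i j * gform n i j = gform n i j * 1 := by
      intro j; simp only [gform]; split_ifs <;> norm_num
    calc ∑ j, projForm n ξ i j * projForm n ξ i j
        = ∑ j, (normSq n ξ ^ 2 * (gform n i j * gform n i j)
            - 2 * normSq n ξ * ξ i * (gform n i j * ξ j) + ξ i ^ 2 * ξ j ^ 2) := by
          refine sum_congr rfl fun j _ => ?_
          simp only [projForm, tensorSq]; ring
      _ = _ := by
          simp only [hgg, sum_add_distrib, sum_sub_distrib, ← mul_sum,
            sum_gform_mul n (fun _ => 1), sum_gform_mul n ξ]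
          unfold normSq; ring
  simp only [hsInner, hrow, sum_sub_distrib, ← mul_sum, sum_const, card_univ,
    Fintype.card_fin, nsmul_eq_mul]
  unfold normSq; ring

lemma hsInner_tensorSq_sub_projForm (n : ℕ) (ξ : Fin n → ℝ) :
    hsInner n (fun i j => tensorSq n ξ i j - normSq n ξ * gform n i j) (projForm n ξ)
      = -(((n : ℝ) - 1) * normSq n ξ ^ 2) := by
  rw [← hsInner_projForm_self, ← hsInner_neg_left]
  congr 1
  funext i j
  simp only [projForm, neg_sub]

lemma normSq_pos {n : ℕ} {ξ : Fin n → ℝ} (hξ : ξ ≠ 0) : 0 < normSq n ξ := by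
  obtain ⟨i, hi⟩ := Function.ne_iff.mp hξ
  exact sum_pos' (fun j _ => sq_nonneg _) ⟨i, mem_univ _, sq_pos_of_ne_zero hi⟩

lemma cast_sub_one_pos {n : ℕ} (hn : 2 ≤ n) : (0 : ℝ) < (n : ℝ) - 1 := by
  have : (2 : ℝ) ≤ n := by exact_mod_cast hn
  linarith

lemma projForm_ne_zero {n : ℕ} (hn : 2 ≤ n) {ξ : Fin n → ℝ} (hξ : ξ ≠ 0) :
    projForm n ξ ≠ 0 := by
  intro h
  have hself := hsInner_projForm_self n ξ
  simp only [h, hsInner, Pi.zero_apply, mul_zero, sum_const_zero] at hself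
  exact (mul_pos (cast_sub_one_pos hn) (pow_pos (normSq_pos hξ) 2)).ne' hself.symm

/-- failure of strong ellipticity when `a ≤ -1/(2(n-1))`: there are a
nonzero `ξ` and a nonzero symmetric `η` (namely `η = |ξ|²g - ξ⊗ξ`) with
`c((1/2)|ξ|⁴|η|² + a⟨ξ⊗ξ - |ξ|²g, η⟩²) ≤ 0`. -/
theorem stmt_3 (n : ℕ) (hn : 2 ≤ n) (c a : ℝ) (hc : 0 < c)
    (ha : a ≤ -1 / (2 * ((n : ℝ) - 1))) :
    ∃ ξ : Fin n → ℝ, ξ ≠ 0 ∧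
      ∃ η : Fin n → Fin n → ℝ, η ≠ 0 ∧ (∀ i j, η i j = η j i) ∧
        (∀ i j, η i j = normSq n ξ * gform n i j - tensorSq n ξ i j) ∧
        c * ((1 / 2) * (normSq n ξ) ^ 2 * hsInner n η η
            + a * (hsInner n (fun i j => tensorSq n ξ i j - normSq n ξ * gform n i j) η) ^ 2)
          ≤ 0 := by
  have hξ : (fun _ : Fin n => (1 : ℝ)) ≠ 0 :=
    Function.ne_iff.mpr ⟨⟨0, by omega⟩, one_ne_zero⟩
  refine ⟨_, hξ, _, projForm_ne_zero hn hξ, projForm_symm n _, fun _ _ => rfl, ?_⟩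
  rw [hsInner_projForm_self, hsInner_tensorSq_sub_projForm]
  set m : ℝ := (n : ℝ) - 1
  set s : ℝ := normSq n fun _ => 1
  have hm : 0 < m := cast_sub_one_pos hn
  have ham : 2 * m * a ≤ -1 := by
    rw [le_div_iff₀ (by positivity)] at ha; linarith
  have hsymbol : (1 / 2) * s ^ 2 * (m * s ^ 2) + a * (-(m * s ^ 2)) ^ 2
      = m * s ^ 4 * (1 + 2 * m * a) / 2 := by ring
  rw [hsymbol]
  have hfactor : m * s ^ 4 * (1 + 2 * m * a) ≤ 0 :=
    mul_nonpos_of_nonneg_of_nonpos (by positivity) (by linarith)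
  exact mul_nonpos_of_nonneg_of_nonpos hc.le (by linarith)
end

section
/- Let V be an n-dimensional real inner product space, ξ ∈ V nonzero, and η = |ξ|²g − ξ⊗ξ. Then for any real numbers a ≤ −1/(2(n−1)), c > 0, k ≥ 1, and any α, β ∈ ℝ, the symbol expression c|ξ|^{2k−2}[ (1/2)|ξ|⁴|η|² + (2α+2β−1)|ξ|²⟨ξ⊗ξ,tr(η⊗η)⟩ + (b−β)⟨ξ⊗ξ,η⟩² + (1/2−a−b−α)|ξ|² tr η ⟨ξ⊗ξ,η⟩ + a(|ξ|² tr η)² ] equals c(1/2 + a(n−1))|ξ|^{2k+2}|η|²/|ξ|⁴·|ξ|⁴ = c(1/2 + a(n−1))|ξ|^{2k−2}|ξ|⁴|η|² ≤ 0 for any b ∈ ℝ, so the symbol is not positive for this η. -/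
/-
Write `S = |ξ|²` and `T = ξ⊗ξ`, so `η = S g - T` and `T` is `S` times the orthogonal projection onto `ℝξ`.
Then `η ξ = 0`, hence `η² = S η`, `⟨T, η⟩ = S tr T - |T|² = 0` and `⟨T, η²⟩ = S ⟨T, η⟩ = 0`: every mixed
term vanishes, while `tr η = (n - 1) S` and `|η|² = S tr η = (n - 1) S²`. The expression collapses to
`c (1/2 + a (n - 1)) S^(k-1) S² |η|²`, whose coefficient is `≤ 0` as soon as `a ≤ -1/(2(n - 1))`.
-/

open Finset

section HilbertSchmidt

variable {n : ℕ}

lemma normSq_nonneg (ξ : Fin n → ℝ) : 0 ≤ normSq n ξ :=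
  sum_nonneg fun i _ => sq_nonneg (ξ i)

lemma hsInner_comm (A B : Fin n → Fin n → ℝ) : hsInner n A B = hsInner n B A := by
  simp only [hsInner, mul_comm]

lemma hsInner_smul_sub_right (A B C : Fin n → Fin n → ℝ) (s : ℝ) :
    hsInner n A (fun i j => s * B i j - C i j) = s * hsInner n A B - hsInner n A C := by
  simp only [hsInner, mul_sub, sum_sub_distrib, mul_sum, mul_left_comm s]

lemma hsInner_gform_right (A : Fin n → Fin n → ℝ) : hsInner n A (gform n) = traceForm n A := by
  simp [hsInner, gform, traceForm]

lemma hsInner_tensorSq_tensorSq (ξ : Fin n → ℝ) :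
    hsInner n (tensorSq n ξ) (tensorSq n ξ) = normSq n ξ ^ 2 := by
  simp only [hsInner, tensorSq, normSq, sq, sum_mul, mul_sum]
  exact sum_congr rfl fun i _ => sum_congr rfl fun j _ => by ring

lemma traceForm_tensorSq (ξ : Fin n → ℝ) : traceForm n (tensorSq n ξ) = normSq n ξ := by
  simp only [traceForm, tensorSq, normSq, sq]

lemma traceForm_gform : traceForm n (gform n) = n := by
  simp [traceForm, gform]

end HilbertSchmidt

section TransverseForm

variable {n : ℕ} (ξ : Fin n → ℝ)

noncomputable def transverseForm : Fin n → Fin n → ℝ :=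
  fun i j => normSq n ξ * gform n i j - tensorSq n ξ i j

lemma transverseForm_eq :
    transverseForm ξ = fun i j => normSq n ξ * gform n i j - tensorSq n ξ i j :=
  rfl

lemma transverseForm_comm (i j : Fin n) : transverseForm ξ i j = transverseForm ξ j i := by
  simp only [transverseForm, gform, tensorSq, eq_comm (a := i), mul_comm (ξ i)]

lemma sum_transverseForm_mul (i : Fin n) : ∑ k, transverseForm ξ k i * ξ k = 0 := by
  simp [transverseForm, gform, tensorSq, sub_mul, sum_sub_distrib, ite_mul, normSq, sq, sum_mul,
    mul_assoc, mul_comm (ξ i)]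

lemma trComp_transverseForm :
    trComp n (transverseForm ξ) = fun i j => normSq n ξ * transverseForm ξ i j := by
  ext i j
  have hξ : ∑ k, transverseForm ξ k i * ξ k * ξ j = 0 := by
    rw [← sum_mul, sum_transverseForm_mul, zero_mul]
  simp only [trComp]
  conv_lhs => enter [2, k, 2]; rw [transverseForm_eq]
  simp only [mul_sub, sum_sub_distrib, gform, tensorSq, mul_ite, mul_one, mul_zero,
    sum_ite_eq', mem_univ, if_true, ← mul_assoc, hξ, sub_zero]
  rw [transverseForm_comm, mul_comm]

lemma hsInner_tensorSq_transverseForm : hsInner n (tensorSq n ξ) (transverseForm ξ) = 0 := by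
  rw [transverseForm_eq, hsInner_smul_sub_right, hsInner_gform_right,
    traceForm_tensorSq, hsInner_tensorSq_tensorSq, sub_eq_zero, sq]

lemma hsInner_tensorSq_trComp_transverseForm :
    hsInner n (tensorSq n ξ) (trComp n (transverseForm ξ)) = 0 := by
  simp only [trComp_transverseForm, hsInner, ← mul_sum, mul_left_comm _ (normSq n ξ)]
  rw [← hsInner, hsInner_tensorSq_transverseForm, mul_zero]

lemma traceForm_transverseForm : traceForm n (transverseForm ξ) = (n - 1) * normSq n ξ := by
  simp only [traceForm, transverseForm, sum_sub_distrib, ← mul_sum]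
  rw [← traceForm, ← traceForm, traceForm_gform, traceForm_tensorSq]
  ring

lemma hsInner_transverseForm_self :
    hsInner n (transverseForm ξ) (transverseForm ξ) = (n - 1) * normSq n ξ ^ 2 := by
  conv_lhs => enter [3]; rw [transverseForm_eq]
  rw [hsInner_smul_sub_right, hsInner_gform_right, hsInner_comm,
    hsInner_tensorSq_transverseForm, traceForm_transverseForm]
  ring

end TransverseForm

lemma half_add_mul_sub_one_nonpos {n : ℕ} {a : ℝ} (hn : 2 ≤ n)
    (ha : a ≤ -1 / (2 * ((n : ℝ) - 1))) :
    1 / 2 + a * ((n : ℝ) - 1) ≤ 0 := by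
  have hpos : (0 : ℝ) < 2 * ((n : ℝ) - 1) := by
    have : (2 : ℝ) ≤ n := by exact_mod_cast hn
    linarith
  have := (le_div_iff₀ hpos).1 ha
  linarith

theorem stmt_19_general (n k : ℕ) (hn : 2 ≤ n) (a b c α β : ℝ)
    (hc : 0 < c) (ha : a ≤ -1 / (2 * ((n : ℝ) - 1)))
    (ξ : Fin n → ℝ)
    (η : Fin n → Fin n → ℝ)
    (hη : ∀ i j, η i j = normSq n ξ * gform n i j - tensorSq n ξ i j) :
    c * (normSq n ξ) ^ (k - 1) *
        ((1 / 2) * (normSq n ξ) ^ 2 * hsInner n η η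
          + (2 * α + 2 * β - 1) * normSq n ξ * hsInner n (tensorSq n ξ) (trComp n η)
          + (b - β) * (hsInner n (tensorSq n ξ) η) ^ 2
          + (1 / 2 - a - b - α) * normSq n ξ * traceForm n η * hsInner n (tensorSq n ξ) η
          + a * (normSq n ξ * traceForm n η) ^ 2)
      = c * (1 / 2 + a * ((n : ℝ) - 1)) * (normSq n ξ) ^ (k - 1)
          * (normSq n ξ) ^ 2 * hsInner n η η
    ∧ c * (1 / 2 + a * ((n : ℝ) - 1)) * (normSq n ξ) ^ (k - 1)
          * (normSq n ξ) ^ 2 * hsInner n η η ≤ 0 := by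
  obtain rfl : η = transverseForm ξ := funext₂ hη
  rw [hsInner_transverseForm_self, hsInner_tensorSq_trComp_transverseForm,
    hsInner_tensorSq_transverseForm, traceForm_transverseForm]
  have hn1 : (0 : ℝ) ≤ n - 1 := by
    have : (2 : ℝ) ≤ n := by exact_mod_cast hn
    linarith
  refine ⟨by ring, ?_⟩
  have hS := normSq_nonneg ξ
  have hcoef := mul_nonpos_of_nonneg_of_nonpos hc.le (half_add_mul_sub_one_nonpos hn ha)
  calc c * (1 / 2 + a * ((n : ℝ) - 1)) * normSq n ξ ^ (k - 1) * normSq n ξ ^ 2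
        * ((n - 1) * normSq n ξ ^ 2)
      = c * (1 / 2 + a * ((n : ℝ) - 1)) * (normSq n ξ ^ (k - 1) * normSq n ξ ^ 2
        * ((n - 1) * normSq n ξ ^ 2)) := by ring
    _ ≤ 0 := mul_nonpos_of_nonpos_of_nonneg hcoef (by positivity)

/-- for `η = |ξ|²g - ξ⊗ξ` with `ξ ≠ 0`, the full adjusted symbol
expression (with any coefficients `b, α, β`) evaluates to
`c(1/2 + a(n-1))|ξ|^{2k-2}|ξ|⁴|η|²`, which is `≤ 0` when `a ≤ -1/(2(n-1))`. -/
theorem stmt_19 (n k : ℕ) (hn : 2 ≤ n) (hk : 1 ≤ k) (a b c α β : ℝ)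
    (hc : 0 < c) (ha : a ≤ -1 / (2 * ((n : ℝ) - 1)))
    (ξ : Fin n → ℝ) (hξ : ξ ≠ 0)
    (η : Fin n → Fin n → ℝ)
    (hη : ∀ i j, η i j = normSq n ξ * gform n i j - tensorSq n ξ i j) :
    c * (normSq n ξ) ^ (k - 1) *
        ((1 / 2) * (normSq n ξ) ^ 2 * hsInner n η η
          + (2 * α + 2 * β - 1) * normSq n ξ * hsInner n (tensorSq n ξ) (trComp n η)
          + (b - β) * (hsInner n (tensorSq n ξ) η) ^ 2
          + (1 / 2 - a - b - α) * normSq n ξ * traceForm n η * hsInner n (tensorSq n ξ) η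
          + a * (normSq n ξ * traceForm n η) ^ 2)
      = c * (1 / 2 + a * ((n : ℝ) - 1)) * (normSq n ξ) ^ (k - 1)
          * (normSq n ξ) ^ 2 * hsInner n η η
    ∧ c * (1 / 2 + a * ((n : ℝ) - 1)) * (normSq n ξ) ^ (k - 1)
          * (normSq n ξ) ^ 2 * hsInner n η η ≤ 0 :=
  stmt_19_general n k hn a b c α β hc ha ξ η hη
end
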